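/- arXiv:2407.21660 — 2 statements merged into one kernel-verified Lean document; each statement's English description precedes it below -/
import Mathlib

section
/- If 0 → A → B → C → 0 is a pure exact sequence of left R-modules with B and C strongly fp-injective, then A is strongly fp-injective. -/
open CategoryTheory

universe u

/-- The `n`-th Ext group `Ext^n_R(P, M)` of two left `R`-modules, computed in the
abelian category of `R`-modules (as a `ℤ`-linear category, so that `R` may be
noncommutative). -/
noncomputable def ExtGrp (R : Type u) [Ring R] (n : ℕ)
    (P M : Type u) [AddCommGroup P] [Module R P] [AddCommGroup M] [Module R M] : Type u :=
  ((Ext ℤ (ModuleCat.{u} R) n).obj (Opposite.op (ModuleCat.of R P))).obj (ModuleCat.of R M)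

/-- A left `R`-module `M` is strongly fp-injective if `Ext^n_R(P, M) = 0` for every
finitely presented left `R`-module `P` and every `n ≥ 1`. -/
def StronglyFpInjective (R : Type u) [Ring R] (M : Type u) [AddCommGroup M] [Module R M] : Prop :=
  ∀ (P : Type u) [AddCommGroup P] [Module R P], Module.FinitePresentation R P →
    ∀ n : ℕ, 1 ≤ n → Subsingleton (ExtGrp R n P M)

/-- A left `R`-module `M` is fp-injective if `Ext¹_R(P, M) = 0` for every finitely
presented left `R`-module `P`. -/
def FpInjective (R : Type u) [Ring R] (M : Type u) [AddCommGroup M] [Module R M] : Prop :=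
  ∀ (P : Type u) [AddCommGroup P] [Module R P], Module.FinitePresentation R P →
    Subsingleton (ExtGrp R 1 P M)

/-- A short exact sequence `0 → A → B → C → 0` of left `R`-modules (given by the maps
`f : A → B` and `g : B → C`) is pure if it remains exact after applying `Hom_R(N, -)`
for every finitely presented left `R`-module `N`. -/
def HomPure (R : Type u) [Ring R] {A B C : Type u} [AddCommGroup A] [Module R A]
    [AddCommGroup B] [Module R B] [AddCommGroup C] [Module R C]
    (f : A →ₗ[R] B) (g : B →ₗ[R] C) : Prop :=
  ∀ (N : Type u) [AddCommGroup N] [Module R N], Module.FinitePresentation R N →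
    Function.Injective (fun φ : N →ₗ[R] A => f ∘ₗ φ) ∧
    Function.Exact (fun φ : N →ₗ[R] A => f ∘ₗ φ) (fun ψ : N →ₗ[R] B => g ∘ₗ ψ) ∧
    Function.Surjective (fun ψ : N →ₗ[R] B => g ∘ₗ ψ)

section Aux

open Limits

lemma aux_subsingleton_of_isZero {S : Type*} [Ring S] {M : ModuleCat S} (h : IsZero M) :
    Subsingleton M := by
  constructor
  intro x y
  have hid : (𝟙 M : M ⟶ M) = 0 := h.eq_of_src _ _
  calc x = (𝟙 M : M ⟶ M) x := rfl
    _ = (0 : M ⟶ M) x := by rw [hid]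
    _ = (𝟙 M : M ⟶ M) y := by rw [hid]; rfl
    _ = y := rfl

lemma aux_subsingleton_of_iso {S : Type*} [Ring S] {M N : ModuleCat S} (e : M ≅ N)
    (h : Subsingleton N) : Subsingleton M := by
  constructor
  intro x y
  have h1 : e.hom x = e.hom y := Subsingleton.elim _ _
  have h2 : e.inv (e.hom x) = e.inv (e.hom y) := congrArg e.inv h1
  have h3 : ∀ z : M, e.inv (e.hom z) = z := by
    intro z
    have := ConcreteCategory.congr_hom e.hom_inv_id z
    exact this
  rw [h3, h3] at h2
  exact h2

end Aux

/-- If `0 → A → B → C → 0` is a pure exact sequence of left `R`-modules with `B` and `C`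
strongly fp-injective, then `A` is strongly fp-injective. -/
theorem stronglyFpInjective_of_pure_kernel
    (R : Type u) [Ring R] (A B C : Type u)
    [AddCommGroup A] [Module R A] [AddCommGroup B] [Module R B] [AddCommGroup C] [Module R C]
    (f : A →ₗ[R] B) (g : B →ₗ[R] C)
    (hf : Function.Injective f) (hg : Function.Surjective g) (hfg : Function.Exact f g)
    (hpure : HomPure R f g)
    (hB : StronglyFpInjective R B) (hC : StronglyFpInjective R C) :
    StronglyFpInjective R A := by
    classical
  intro P _ _ hP n hn
  obtain ⟨m, rfl⟩ : ∃ m, n = m + 1 := ⟨n - 1, by omega⟩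
  -- setup
  let X : ModuleCat.{u} R := ModuleCat.of R P
  let F : ProjectiveResolution X := (HasProjectiveResolution.out (Z := X)).some
  let MA : ModuleCat.{u} R := ModuleCat.of R A
  let MB : ModuleCat.{u} R := ModuleCat.of R B
  let MC : ModuleCat.{u} R := ModuleCat.of R C
  let fM : MA ⟶ MB := ModuleCat.ofHom f
  let gM : MB ⟶ MC := ModuleCat.ofHom g
  haveI mono_fM : Mono fM := (ModuleCat.mono_iff_injective _).2 hf
  haveI epi_gM : Epi gM := (ModuleCat.epi_iff_surjective _).2 hg
  let KA := F.complex.linearYonedaObj ℤ MA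
  let KB := F.complex.linearYonedaObj ℤ MB
  let KC := F.complex.linearYonedaObj ℤ MC
  -- the maps of complexes
  let Sf : KA ⟶ KB :=
    { f := fun i => ModuleCat.ofHom (Linear.rightComp ℤ (F.complex.X i) fM :
        (F.complex.X i ⟶ MA) →ₗ[ℤ] (F.complex.X i ⟶ MB))
      comm' := by
        intro i j hij
        ext φ
        show (Linear.leftComp ℤ MB (F.complex.d j i)) ((Linear.rightComp ℤ _ fM) φ) =
          (Linear.rightComp ℤ _ fM) ((Linear.leftComp ℤ MA (F.complex.d j i)) φ)
        simp only [Linear.leftComp_apply, Linear.rightComp_apply, Category.assoc]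
        exact (Category.assoc _ _ _).symm }
  let Sg : KB ⟶ KC :=
    { f := fun i => ModuleCat.ofHom (Linear.rightComp ℤ (F.complex.X i) gM :
        (F.complex.X i ⟶ MB) →ₗ[ℤ] (F.complex.X i ⟶ MC))
      comm' := by
        intro i j hij
        ext φ
        show (Linear.leftComp ℤ MC (F.complex.d j i)) ((Linear.rightComp ℤ _ gM) φ) =
          (Linear.rightComp ℤ _ gM) ((Linear.leftComp ℤ MB (F.complex.d j i)) φ)
        simp only [Linear.leftComp_apply, Linear.rightComp_apply, Category.assoc]
        exact (Category.assoc _ _ _).symm }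
  have hfg0 : fM ≫ gM = 0 := by
    ext a
    show g (f a) = 0
    exact (hfg (f a)).2 ⟨a, rfl⟩
  let SS : ShortComplex (CochainComplex (ModuleCat.{u} ℤ) ℕ) :=
    ShortComplex.mk Sf Sg (by
      ext i φ
      show ((Linear.rightComp ℤ _ gM) ((Linear.rightComp ℤ _ fM) φ)) =
        (0 : KA ⟶ KC).f i φ
      simp only [Linear.rightComp_apply, Category.assoc, hfg0, Limits.comp_zero]
      show (φ ≫ fM) ≫ gM = 0
      have key : ∀ ψ : F.complex.X i ⟶ MA, (ψ ≫ fM) ≫ gM = 0 := fun ψ => by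
        rw [Category.assoc, hfg0, Limits.comp_zero]
      exact key φ)
  -- degreewise short exactness
  have hSS : SS.ShortExact := by
    apply HomologicalComplex.shortExact_of_degreewise_shortExact
    intro i
    have hmono : Mono (Sf.f i) := by
      rw [ModuleCat.mono_iff_injective]
      have : Function.Injective (fun φ : F.complex.X i ⟶ MA => φ ≫ fM) := by
        intro φ₁ φ₂ h
        ext x
        exact hf (ConcreteCategory.congr_hom h x)
      exact this
    have hepi : Epi (Sg.f i) := by
      rw [ModuleCat.epi_iff_surjective]
      have : Function.Surjective (fun ψ : F.complex.X i ⟶ MB => ψ ≫ gM) := by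
        intro φ
        exact ⟨Projective.factorThru φ gM, Projective.factorThru_comp φ gM⟩
      exact this
    haveI : Mono (SS.map (HomologicalComplex.eval (ModuleCat ℤ) (ComplexShape.up ℕ) i)).f := hmono
    haveI : Epi (SS.map (HomologicalComplex.eval (ModuleCat ℤ) (ComplexShape.up ℕ) i)).g := hepi
    refine ⟨?_⟩
    rw [ShortComplex.moduleCat_exact_iff]
    intro ψ₀ hψ₀
    have hψ : ∀ ψ : F.complex.X i ⟶ MB, ψ ≫ gM = 0 →
        ∃ χ : F.complex.X i ⟶ MA, χ ≫ fM = ψ := by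
      intro ψ hψ
      have hker : ∀ x : F.complex.X i, ψ x ∈ LinearMap.range f := by
        intro x
        exact (hfg (ψ x)).1 (ConcreteCategory.congr_hom hψ x)
      let e : A ≃ₗ[R] LinearMap.range f := LinearEquiv.ofInjective f hf
      refine ⟨(ModuleCat.ofHom (e.symm.toLinearMap.comp (LinearMap.codRestrict (LinearMap.range f) ψ.hom hker)) :
        F.complex.X i ⟶ MA), ?_⟩
      ext x
      show f (e.symm ⟨ψ x, hker x⟩) = ψ x
      have h4 : ∀ z : LinearMap.range f, f (e.symm z) = (z : B) := by
        intro z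
        conv_rhs => rw [← e.apply_symm_apply z]
        rfl
      exact h4 _
    exact hψ ψ₀ hψ₀
  -- identification of Ext with homology
  have extIso : ∀ (M : Type u) [AddCommGroup M] [Module R M] (k : ℕ),
      (((Ext ℤ (ModuleCat.{u} R) k).obj (Opposite.op X)).obj (ModuleCat.of R M)) ≅
        ((F.complex.linearYonedaObj ℤ (ModuleCat.of R M)).homology k) :=
    fun M _ _ k => F.isoExt k (ModuleCat.of R M)
  have hKB : ∀ k, 1 ≤ k → Limits.IsZero (KB.homology k) := by
    intro k hk
    haveI : Subsingleton (((Ext ℤ (ModuleCat.{u} R) k).obj (Opposite.op X)).obj MB) :=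
      hB P hP k hk
    exact (ModuleCat.isZero_of_subsingleton _).of_iso (extIso B k).symm
  have hKC : ∀ k, 1 ≤ k → Limits.IsZero (KC.homology k) := by
    intro k hk
    haveI : Subsingleton (((Ext ℤ (ModuleCat.{u} R) k).obj (Opposite.op X)).obj MC) :=
      hC P hP k hk
    exact (ModuleCat.isZero_of_subsingleton _).of_iso (extIso C k).symm
  -- the connecting map is zero
  have hrel : (ComplexShape.up ℕ).Rel m (m + 1) := rfl
  have hδ : hSS.δ m (m + 1) hrel = 0 := by
    rcases Nat.eq_zero_or_pos m with hm | hm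
    · subst hm
      haveI hepi0 : Epi (HomologicalComplex.cyclesMap Sg 0) := by
        rw [ModuleCat.epi_iff_surjective]
        intro z
        set φ : F.complex.X 0 ⟶ MC := KC.iCycles 0 z with hφdef
        have hcyc : F.complex.d 1 0 ≫ φ = 0 := by
          have h0 := ConcreteCategory.congr_hom (KC.iCycles_d 0 1) z
          have h1 : (KC.d 0 1) φ = F.complex.d 1 0 ≫ φ := by
            rw [ChainComplex.linearYonedaObj_d]
            rfl
          rw [← h1]
          exact h0
        let φ' : X ⟶ MC :=
          F.isColimitCokernelCofork.desc (Limits.CokernelCofork.ofπ φ hcyc)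
        have hfac : F.π.f 0 ≫ φ' = φ :=
          Limits.Cofork.IsColimit.π_desc F.isColimitCokernelCofork
        obtain ⟨ψ', hψ'⟩ := (hpure P hP).2.2 (φ'.hom : P →ₗ[R] C)
        let ψc : X ⟶ MB := ModuleCat.ofHom ψ'
        let ψM : F.complex.X 0 ⟶ MB := F.π.f 0 ≫ ψc
        have hψcyc : (KB.d 0 ((ComplexShape.up ℕ).next 0)) ψM = 0 := by
          have hnext : (ComplexShape.up ℕ).next 0 = 1 := (ComplexShape.up ℕ).next_eq' rfl
          rw [hnext]
          have h1 : (KB.d 0 1) ψM = F.complex.d 1 0 ≫ ψM := by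
            rw [ChainComplex.linearYonedaObj_d]
            rfl
          rw [h1]
          show F.complex.d 1 0 ≫ ψM = 0
          have hz : F.complex.d 1 0 ≫ F.π.f 0 = 0 := F.complex_d_comp_π_f_zero
          calc F.complex.d 1 0 ≫ ψM = (F.complex.d 1 0 ≫ F.π.f 0) ≫ ψc := (Category.assoc _ _ _).symm
            _ = 0 := by rw [hz]; exact Limits.zero_comp
        let w : KB.cycles 0 := (KB.sc 0).moduleCatCyclesIso.inv ⟨ψM, hψcyc⟩
        refine ⟨w, ?_⟩
        have hinj := (ModuleCat.mono_iff_injective (KC.iCycles 0)).1 inferInstance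
        apply hinj
        have h2 := ConcreteCategory.congr_hom (HomologicalComplex.cyclesMap_i Sg 0) w
        -- h2 : KC.iCycles 0 (cyclesMap Sg 0 w) = Sg.f 0 (KB.iCycles 0 w)
        have h3 : KB.iCycles 0 w = ψM :=
          ShortComplex.moduleCatCyclesIso_inv_iCycles_apply (KB.sc 0) ⟨ψM, hψcyc⟩
        rw [show (KC.iCycles 0) ((HomologicalComplex.cyclesMap Sg 0) w) =
          (Sg.f 0) ((KB.iCycles 0) w) from h2, h3]
        show (F.π.f 0 ≫ ψc) ≫ gM = φ
        refine (Category.assoc _ _ _).trans ?_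
        have h5 : ψc ≫ gM = φ' := ModuleCat.hom_ext hψ'
        exact (congrArg (F.π.f 0 ≫ ·) h5).trans hfac
      haveI : Epi (HomologicalComplex.homologyMap Sg 0) := by
        have h1 : Epi (KB.homologyπ 0 ≫ HomologicalComplex.homologyMap Sg 0) := by
          rw [HomologicalComplex.homologyπ_naturality]
          exact epi_comp _ _
        exact epi_of_epi (KB.homologyπ 0) _
      exact (cancel_epi (HomologicalComplex.homologyMap Sg 0)).1
        (by rw [hSS.comp_δ 0 1 hrel, Limits.comp_zero])
    · exact (hKC m hm).eq_of_src _ _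
  -- conclude
  have hexact := hSS.homology_exact₁ m (m + 1) hrel
  haveI : Mono (HomologicalComplex.homologyMap Sf (m + 1)) := hexact.mono_g hδ
  have hzero : Limits.IsZero (KA.homology (m + 1)) :=
    Limits.IsZero.of_mono (HomologicalComplex.homologyMap Sf (m + 1)) (hKB (m + 1) (by omega))
  exact aux_subsingleton_of_iso (extIso A (m + 1)) (aux_subsingleton_of_isZero hzero)
end

section
/- If R is a left coherent ring, then every fp-injective left R-module is strongly fp-injective; that is, over a left coherent ring the classes of fp-injective and strongly fp-injective left R-modules coincide. -/
set_option maxHeartbeats 1000000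
set_option synthInstance.maxHeartbeats 400000


open CategoryTheory

universe u

section Aux

variable {R : Type u} [Ring R]

/-- Over a left coherent ring, every finitely generated submodule of a finite free module
`Fin k → R` is finitely presented. -/
lemma fp_of_fg_submodule_pi
    (hcoh : ∀ I : Ideal R, I.FG → Module.FinitePresentation R I) :
    ∀ (k : ℕ) (N : Submodule R (Fin k → R)), N.FG → Module.FinitePresentation R N := by
  intro k
  induction k with
  | zero =>
    intro N hN
    have hsub : Subsingleton N := by
      constructor
      rintro ⟨x, hx⟩ ⟨y, hy⟩
      ext i
      exact absurd i.2 (by omega)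
    exact Module.finitePresentation_of_surjective (0 : R →ₗ[R] N)
      (fun y => ⟨0, Subsingleton.elim _ _⟩)
      (by rw [LinearMap.ker_zero]; exact Module.Finite.fg_top)
  | succ k ih =>
    intro N hN
    haveI : Module.Finite R N := ⟨(Submodule.fg_top N).mpr hN⟩
    set l : N →ₗ[R] R := (LinearMap.proj (Fin.last k)) ∘ₗ N.subtype with hl
    have hI : (LinearMap.range l).FG := by
      rw [← Submodule.map_top]
      exact Submodule.FG.map _ (Module.Finite.fg_top)
    haveI : Module.FinitePresentation R (LinearMap.range l) := hcoh _ hI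
    have hsurj : Function.Surjective l.rangeRestrict := l.surjective_rangeRestrict
    have hker : (LinearMap.ker l.rangeRestrict).FG :=
      Module.FinitePresentation.fg_ker _ hsurj
    set e : (LinearMap.ker l.rangeRestrict) →ₗ[R] (Fin k → R) :=
      (LinearMap.funLeft R R Fin.castSucc) ∘ₗ N.subtype ∘ₗ (LinearMap.ker l.rangeRestrict).subtype
      with he
    have hinj : Function.Injective e := by
      rintro ⟨⟨x, hxN⟩, hx⟩ ⟨⟨y, hyN⟩, hy⟩ hxy
      have hx' : x (Fin.last k) = 0 := by
        have := (LinearMap.mem_ker.mp hx)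
        rw [LinearMap.ker_rangeRestrict] at hx
        exact LinearMap.mem_ker.mp hx
      have hy' : y (Fin.last k) = 0 := by
        rw [LinearMap.ker_rangeRestrict] at hy
        exact LinearMap.mem_ker.mp hy
      ext j
      rcases Fin.eq_castSucc_or_eq_last j with ⟨i, rfl⟩ | rfl
      · exact congrFun hxy i
      · show x (Fin.last k) = y (Fin.last k); rw [hx', hy']
    haveI : Module.Finite R (LinearMap.ker l.rangeRestrict) :=
      ⟨(Submodule.fg_top _).mpr hker⟩
    have hN' : (LinearMap.range e).FG := by
      rw [← Submodule.map_top]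
      exact Submodule.FG.map _ (Module.Finite.fg_top)
    haveI : Module.FinitePresentation R (LinearMap.range e) := ih _ hN'
    haveI : Module.FinitePresentation R (LinearMap.ker l.rangeRestrict) := by
      have eq := LinearEquiv.ofInjective e hinj
      exact Module.finitePresentation_of_surjective (M := LinearMap.range e)
        (N := LinearMap.ker l.rangeRestrict) eq.symm.toLinearMap eq.symm.surjective
        (by rw [LinearEquiv.ker eq.symm]; exact Submodule.fg_bot)
    exact Module.finitePresentation_of_ker l.rangeRestrict hsurj


lemma exists_surj_pi (P : Type u) [AddCommGroup P] [Module R P]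
    [Module.FinitePresentation R P] :
    ∃ (n : ℕ) (f : (Fin n → R) →ₗ[R] P), Function.Surjective f ∧ (LinearMap.ker f).FG := by
  obtain ⟨n, v, hv⟩ := Module.Finite.exists_fin (R := R) (M := P)
  refine ⟨n, Fintype.linearCombination R v, ?_, ?_⟩
  · rw [← LinearMap.range_eq_top, Fintype.range_linearCombination, hv]
  · apply Module.FinitePresentation.fg_ker
    rw [← LinearMap.range_eq_top, Fintype.range_linearCombination, hv]

/-- Bundled data of a finitely generated syzygy submodule of a finite free module. -/
structure SyzData (R : Type u) [Ring R] where
  k : ℕ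
  K : Submodule R (Fin k → R)
  hK : K.FG

variable (hfp : ∀ (k : ℕ) (N : Submodule R (Fin k → R)), N.FG → Module.FinitePresentation R N)

/-- Choose a surjection from a finite free module onto the syzygy, with f.g. kernel. -/
noncomputable def nextStep (s : SyzData R) :
    Σ (k' : ℕ), {g : (Fin k' → R) →ₗ[R] s.K // Function.Surjective g ∧ (LinearMap.ker g).FG} := by
  haveI : Module.FinitePresentation R s.K := hfp s.k s.K s.hK
  have h := exists_surj_pi (R := R) s.K
  exact ⟨h.choose, h.choose_spec.choose, h.choose_spec.choose_spec⟩

/-- The sequence of syzygies. -/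
noncomputable def seq (s0 : SyzData R) : ℕ → SyzData R
  | 0 => s0
  | (i+1) => ⟨(nextStep hfp (seq s0 i)).1, LinearMap.ker (nextStep hfp (seq s0 i)).2.1,
      (nextStep hfp (seq s0 i)).2.2.2⟩

/-- The chosen surjection from level `i+1` onto the `i`-th syzygy. -/
noncomputable def gmap (s0 : SyzData R) (i : ℕ) :
    (Fin ((seq hfp s0 (i+1)).k) → R) →ₗ[R] (seq hfp s0 i).K :=
  (nextStep hfp (seq hfp s0 i)).2.1

lemma gmap_surjective (s0 : SyzData R) (i : ℕ) : Function.Surjective (gmap hfp s0 i) :=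
  (nextStep hfp (seq hfp s0 i)).2.2.1

lemma ker_gmap (s0 : SyzData R) (i : ℕ) :
    LinearMap.ker (gmap hfp s0 i) = (seq hfp s0 (i+1)).K := rfl

/-- The free resolution complex. -/
noncomputable def resComplex (s0 : SyzData R) : ChainComplex (ModuleCat.{u} R) ℕ :=
  ChainComplex.of (fun i => ModuleCat.of R (Fin ((seq hfp s0 i).k) → R))
    (fun i => ModuleCat.ofHom (((seq hfp s0 i).K).subtype ∘ₗ gmap hfp s0 i))
    (fun i => by
      apply ModuleCat.hom_ext
      apply LinearMap.ext
      intro x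
      have hx : ((gmap hfp s0 (i+1)) x : Fin ((seq hfp s0 (i+1)).k) → R)
          ∈ LinearMap.ker (gmap hfp s0 i) := by
        rw [ker_gmap]
        exact ((gmap hfp s0 (i+1)) x).2
      show (((seq hfp s0 i).K).subtype ∘ₗ gmap hfp s0 i)
        ((((seq hfp s0 (i+1)).K).subtype ∘ₗ gmap hfp s0 (i+1)) x) = 0
      simp only [LinearMap.comp_apply, Submodule.subtype_apply]
      rw [LinearMap.mem_ker.mp hx]
      simp)

instance resComplex_projective (s0 : SyzData R) (i : ℕ) :
    Projective ((resComplex hfp s0).X i) :=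
  ModuleCat.projective_of_free (M := ModuleCat.of R (Fin ((seq hfp s0 i).k) → R))
    (Pi.basisFun R (Fin ((seq hfp s0 i).k)))

lemma resComplex_d (s0 : SyzData R) (i : ℕ) :
    (resComplex hfp s0).d (i+1) i
      = ModuleCat.ofHom (((seq hfp s0 i).K).subtype ∘ₗ gmap hfp s0 i) :=
  ChainComplex.of_d (fun i => ModuleCat.of R (Fin ((seq hfp s0 i).k) → R))
    (fun i => ModuleCat.ofHom (((seq hfp s0 i).K).subtype ∘ₗ gmap hfp s0 i)) i

lemma resComplex_exactAt_succ (s0 : SyzData R) (n : ℕ) :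
    (resComplex hfp s0).ExactAt (n+1) := by
  rw [HomologicalComplex.exactAt_iff' _ (n+2) (n+1) n (by simp) (by simp)]
  rw [ShortComplex.moduleCat_exact_iff]
  intro x hx
  have hg : (HomologicalComplex.sc' (resComplex hfp s0) (n + 2) (n + 1) n).g
      = (resComplex hfp s0).d (n+1) n := rfl
  rw [hg, resComplex_d] at hx
  have hxk : (show Fin ((seq hfp s0 (n+1)).k) → R from x) ∈ LinearMap.ker (gmap hfp s0 n) := by
    rw [LinearMap.mem_ker, ← Subtype.coe_inj]
    exact hx
  rw [ker_gmap] at hxk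
  obtain ⟨y, hy⟩ := gmap_surjective hfp s0 (n+1) ⟨x, hxk⟩
  refine ⟨y, ?_⟩
  have hf : (HomologicalComplex.sc' (resComplex hfp s0) (n + 2) (n + 1) n).f
      = (resComplex hfp s0).d (n+2) (n+1) := rfl
  rw [hf, resComplex_d]
  show ((seq hfp s0 (n+1)).K).subtype (gmap hfp s0 (n+1) y) = x
  rw [hy]
  rfl

noncomputable def resOfSurj (P : ModuleCat.{u} R) (k0 : ℕ) (π : (Fin k0 → R) →ₗ[R] P)
    (hπ : Function.Surjective π) (hk : (LinearMap.ker π).FG) :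
    ProjectiveResolution P where
  complex := resComplex hfp ⟨k0, LinearMap.ker π, hk⟩
  π := (ChainComplex.toSingle₀Equiv _ _).symm ⟨ModuleCat.ofHom π, by
    rw [resComplex_d]
    apply ModuleCat.hom_ext
    apply LinearMap.ext
    intro x
    exact LinearMap.mem_ker.mp (gmap hfp ⟨k0, LinearMap.ker π, hk⟩ 0 x).2⟩
  quasiIso := ⟨fun n => by
    cases n with
    | zero =>
      rw [ChainComplex.quasiIsoAt₀_iff, ShortComplex.quasiIso_iff_of_zeros']
      · refine (ShortComplex.exact_and_epi_g_iff_of_iso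
            (S₂ := ShortComplex.mk
              (ModuleCat.ofHom (((LinearMap.ker π).subtype).comp
                (gmap hfp ⟨k0, LinearMap.ker π, hk⟩ 0)))
              (ModuleCat.ofHom π)
              (ModuleCat.hom_ext (LinearMap.ext fun x => LinearMap.mem_ker.mp
                ((gmap hfp ⟨k0, LinearMap.ker π, hk⟩ 0) x).2)))
            (ShortComplex.isoMk (Iso.refl _) (Iso.refl _) (Iso.refl _)
              (by simp [resComplex_d])
              (by simp [ChainComplex.toSingle₀Equiv_symm_apply_f_zero]))).2 ⟨?_, ?_⟩
        · rw [ShortComplex.moduleCat_exact_iff]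
          intro x hx
          have hxk : x ∈ LinearMap.ker π := hx
          obtain ⟨y, hy⟩ := gmap_surjective hfp ⟨k0, LinearMap.ker π, hk⟩ 0 ⟨x, hxk⟩
          exact ⟨y, congrArg Subtype.val hy⟩
        · exact (ModuleCat.epi_iff_surjective _).2 hπ
      all_goals rfl
    | succ n =>
      rw [quasiIsoAt_iff_exactAt']
      · exact resComplex_exactAt_succ hfp _ n
      · apply ChainComplex.exactAt_succ_single_obj⟩

lemma subsingleton_of_isZero {X : ModuleCat.{u} ℤ} (h : Limits.IsZero X) :
    Subsingleton X := by
  constructor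
  intro a b
  have h0 : (𝟙 X : X ⟶ X) = 0 := h.eq_of_src _ _
  calc a = (𝟙 X : X ⟶ X) a := rfl
    _ = (0 : X ⟶ X) a := by rw [h0]
    _ = (𝟙 X : X ⟶ X) b := by rw [h0]; rfl
    _ = b := rfl

noncomputable def ExtGrp.iso (n : ℕ) (P M : Type u) [AddCommGroup P] [Module R P]
    [AddCommGroup M] [Module R M] (res : ProjectiveResolution (ModuleCat.of R P)) :
    ExtGrp R n P M ≃ (res.complex.linearYonedaObj ℤ (ModuleCat.of R M)).homology n :=
  ((forget (ModuleCat ℤ)).mapIso (res.isoExt n (ModuleCat.of R M))).toEquiv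

include hfp in
lemma subsingleton_extGrp (M : Type u) [AddCommGroup M] [Module R M]
    (hext : ∀ (j : ℕ) (K : Submodule R (Fin j → R)), K.FG →
      ∀ φ : K →ₗ[R] M, ∃ h : (Fin j → R) →ₗ[R] M, h ∘ₗ K.subtype = φ)
    (P : Type u) [AddCommGroup P] [Module R P] (hP : Module.FinitePresentation R P)
    (n : ℕ) (hn : 1 ≤ n) : Subsingleton (ExtGrp R n P M) := by
  haveI := hP
  obtain ⟨k0, π, hπ, hk⟩ := exists_surj_pi (R := R) P
  set s0 : SyzData R := ⟨k0, LinearMap.ker π, hk⟩ with hs0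
  let res := resOfSurj hfp (ModuleCat.of R P) k0 π hπ hk
  obtain ⟨m, rfl⟩ : ∃ m, n = m + 1 := ⟨n - 1, by omega⟩
  have hz : Limits.IsZero
      ((res.complex.linearYonedaObj ℤ (ModuleCat.of R M)).homology (m+1)) := by
    rw [← HomologicalComplex.exactAt_iff_isZero_homology]
    rw [HomologicalComplex.exactAt_iff' _ m (m+1) (m+2) (by simp) (by simp)]
    rw [ShortComplex.moduleCat_exact_iff]
    intro f hf
    -- view `f` as an `R`-linear map
    let fR : (Fin ((seq hfp s0 (m+1)).k) → R) →ₗ[R] M := (f : res.complex.X (m+1) ⟶ ModuleCat.of R M).hom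
    set q := gmap hfp s0 m with hq
    have hcoc : ∀ x, fR (((seq hfp s0 (m+1)).K).subtype (gmap hfp s0 (m+1) x)) = 0 := by
      intro x
      have hg : (HomologicalComplex.sc' (res.complex.linearYonedaObj ℤ (ModuleCat.of R M))
          m (m+1) (m+2)).g f
          = (Linear.leftComp ℤ (ModuleCat.of R M) (res.complex.d (m+2) (m+1))) f := by
        rw [show (HomologicalComplex.sc' (res.complex.linearYonedaObj ℤ (ModuleCat.of R M))
          m (m+1) (m+2)).g = (res.complex.linearYonedaObj ℤ (ModuleCat.of R M)).d (m+1) (m+2)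
          from rfl, ChainComplex.linearYonedaObj_d]
        rfl
      have h0 : (Linear.leftComp ℤ (ModuleCat.of R M) (res.complex.d (m+2) (m+1))) f = 0 := by
        rw [← hg, hf]; rfl
      have h1 : res.complex.d (m+2) (m+1) ≫ f = 0 := h0
      have h2 : (res.complex.d (m+2) (m+1) ≫ f : res.complex.X (m+2) ⟶ ModuleCat.of R M) x = 0 := by
        rw [h1]; rfl
      have h3 : res.complex.d (m+2) (m+1)
          = ModuleCat.ofHom (((seq hfp s0 (m+1)).K).subtype ∘ₗ gmap hfp s0 (m+1)) :=
        resComplex_d hfp s0 (m+1)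
      rw [h3] at h2
      exact h2
    -- `f` vanishes on the kernel of `q = gmap m`
    have hle : LinearMap.ker q ≤ LinearMap.ker fR := by
      intro y hy
      rw [ker_gmap] at hy
      obtain ⟨x, hx⟩ := gmap_surjective hfp s0 (m+1) ⟨y, hy⟩
      have := hcoc x
      rw [hx] at this
      exact this
    -- factor `f` through the syzygy `K m`
    let e := q.quotKerEquivOfSurjective (gmap_surjective hfp s0 m)
    let fbar : ((seq hfp s0 m).K : Submodule R (Fin ((seq hfp s0 m).k) → R)) →ₗ[R] M :=
      (Submodule.liftQ (LinearMap.ker q) fR hle) ∘ₗ e.symm.toLinearMap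
    have hfbar : ∀ x, fbar (q x) = fR x := by
      intro x
      have h4 : e.symm (q x) = Submodule.Quotient.mk x := by
        apply e.injective
        simp only [LinearEquiv.apply_symm_apply]
        rfl
      show (Submodule.liftQ (LinearMap.ker q) fR hle) (e.symm (q x)) = fR x
      rw [h4]
      rfl
    obtain ⟨h, hh⟩ := hext _ _ (seq hfp s0 m).hK fbar
    refine ⟨ModuleCat.ofHom h, ?_⟩
    rw [show (HomologicalComplex.sc' (res.complex.linearYonedaObj ℤ (ModuleCat.of R M))
        m (m+1) (m+2)).f = (res.complex.linearYonedaObj ℤ (ModuleCat.of R M)).d m (m+1)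
        from rfl, ChainComplex.linearYonedaObj_d]
    show res.complex.d (m+1) m ≫ (ModuleCat.ofHom h : res.complex.X m ⟶ ModuleCat.of R M) = f
    rw [show res.complex.d (m+1) m
      = ModuleCat.ofHom (((seq hfp s0 m).K).subtype ∘ₗ gmap hfp s0 m)
      from resComplex_d hfp s0 m]
    apply ModuleCat.hom_ext
    apply LinearMap.ext
    intro x
    show h (((seq hfp s0 m).K).subtype (q x)) = fR x
    rw [← hfbar x, ← hh]
    rfl
  haveI := subsingleton_of_isZero hz
  exact (ExtGrp.iso (m+1) P M res).subsingleton
include hfp in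
lemma extension_of_fpInjective (M : Type u) [AddCommGroup M] [Module R M]
    (hM : FpInjective R M) (j : ℕ) (K : Submodule R (Fin j → R)) (hK : K.FG)
    (φ : K →ₗ[R] M) : ∃ h : (Fin j → R) →ₗ[R] M, h ∘ₗ K.subtype = φ := by
  have hC : Module.FinitePresentation R ((Fin j → R) ⧸ K) :=
    Module.finitePresentation_of_surjective K.mkQ (Submodule.mkQ_surjective K)
      (by rwa [Submodule.ker_mkQ])
  have hsub : Subsingleton (ExtGrp R 1 ((Fin j → R) ⧸ K) M) := hM _ hC
  have hkfg : (LinearMap.ker K.mkQ).FG := by rwa [Submodule.ker_mkQ]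
  set s0 : SyzData R := ⟨j, LinearMap.ker K.mkQ, hkfg⟩ with hs0
  let res := resOfSurj hfp (ModuleCat.of R ((Fin j → R) ⧸ K)) j K.mkQ
    (Submodule.mkQ_surjective K) hkfg
  haveI := hsub
  haveI : Subsingleton ((res.complex.linearYonedaObj ℤ (ModuleCat.of R M)).homology 1) := by
    have e := ExtGrp.iso 1 ((Fin j → R) ⧸ K) M res
    exact e.symm.subsingleton
  have hex := (HomologicalComplex.exactAt_iff_isZero_homology
      (res.complex.linearYonedaObj ℤ (ModuleCat.of R M)) 1).mpr
    (ModuleCat.isZero_of_subsingleton _)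
  rw [HomologicalComplex.exactAt_iff' _ 0 1 2 (by simp) (by simp),
    ShortComplex.moduleCat_exact_iff] at hex
  have hK0 : ((seq hfp s0 0).K : Submodule R (Fin j → R)) = K := Submodule.ker_mkQ K
  let φ' : ((seq hfp s0 0).K : Submodule R (Fin j → R)) →ₗ[R] M :=
    φ ∘ₗ (Submodule.inclusion (le_of_eq hK0))
  let f : ((res.complex.linearYonedaObj ℤ (ModuleCat.of R M)).X 1) :=
    ModuleCat.ofHom (φ' ∘ₗ gmap hfp s0 0 : (Fin ((seq hfp s0 1).k) → R) →ₗ[R] M)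
  have hcoc : (HomologicalComplex.sc' (res.complex.linearYonedaObj ℤ (ModuleCat.of R M))
      0 1 2).g f = 0 := by
    rw [show (HomologicalComplex.sc' (res.complex.linearYonedaObj ℤ (ModuleCat.of R M))
      0 1 2).g = (res.complex.linearYonedaObj ℤ (ModuleCat.of R M)).d 1 2 from rfl,
      ChainComplex.linearYonedaObj_d]
    show res.complex.d 2 1 ≫ (f : res.complex.X 1 ⟶ ModuleCat.of R M) = 0
    rw [show res.complex.d 2 1
      = ModuleCat.ofHom (((seq hfp s0 1).K).subtype ∘ₗ gmap hfp s0 1)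
      from resComplex_d hfp s0 1]
    apply ModuleCat.hom_ext
    apply LinearMap.ext
    intro x
    have hx : ((gmap hfp s0 1 x : (seq hfp s0 1).K) : Fin ((seq hfp s0 1).k) → R)
        ∈ LinearMap.ker (gmap hfp s0 0) := by
      rw [ker_gmap]
      exact (gmap hfp s0 1 x).2
    have h0 : gmap hfp s0 0 (((seq hfp s0 1).K).subtype (gmap hfp s0 1 x)) = 0 :=
      LinearMap.mem_ker.mp hx
    show φ' (gmap hfp s0 0 (((seq hfp s0 1).K).subtype (gmap hfp s0 1 x))) = 0
    rw [h0]
    simp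
  obtain ⟨h, hh⟩ := hex f hcoc
  let hR : (Fin j → R) →ₗ[R] M := (h : res.complex.X 0 ⟶ ModuleCat.of R M).hom
  refine ⟨hR, ?_⟩
  apply LinearMap.ext
  intro x
  have hx : (x : Fin j → R) ∈ (seq hfp s0 0).K := by rw [hK0]; exact x.2
  obtain ⟨y, hy⟩ := gmap_surjective hfp s0 0 ⟨(x : Fin j → R), hx⟩
  rw [show (HomologicalComplex.sc' (res.complex.linearYonedaObj ℤ (ModuleCat.of R M)) 0 1 2).f
      = (res.complex.linearYonedaObj ℤ (ModuleCat.of R M)).d 0 1 from rfl,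
    ChainComplex.linearYonedaObj_d,
    show res.complex.d 1 0
      = ModuleCat.ofHom (((seq hfp s0 0).K).subtype ∘ₗ gmap hfp s0 0)
      from resComplex_d hfp s0 0] at hh
  have h1 : hR (((seq hfp s0 0).K).subtype (gmap hfp s0 0 y)) = φ' (gmap hfp s0 0 y) :=
    LinearMap.congr_fun (congrArg ModuleCat.Hom.hom
      (show res.complex.d 1 0 ≫ (h : res.complex.X 0 ⟶ ModuleCat.of R M) = f from hh)) y
  rw [hy] at h1
  show hR ((x : Fin j → R)) = φ x
  calc hR ((x : Fin j → R)) = φ' ⟨(x : Fin j → R), hx⟩ := h1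
    _ = φ x := by
        show φ (Submodule.inclusion (le_of_eq hK0) ⟨(x : Fin j → R), hx⟩) = φ x
        congr 1


end Aux

/-- Over a left coherent ring (every finitely generated left ideal is finitely
presented), the fp-injective and strongly fp-injective left `R`-modules coincide. -/
theorem fpInjective_iff_stronglyFpInjective_of_leftCoherent
    (R : Type u) [Ring R]
    (hcoh : ∀ I : Ideal R, I.FG → Module.FinitePresentation R I)
    (M : Type u) [AddCommGroup M] [Module R M] :
    FpInjective R M ↔ StronglyFpInjective R M := by
  have hfp := fp_of_fg_submodule_pi hcoh
  constructor
  · intro hM P _ _ hP n hn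
    exact subsingleton_extGrp hfp M
      (fun j K hK φ => extension_of_fpInjective hfp M hM j K hK φ) P hP n hn
  · intro hM P _ _ hP
    exact hM P hP 1 le_rfl
end
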